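/- For every β > 0, σ̄_β ≤ 2√2/3, and there exists a constant C > 0 independent of β such that σ̄_β ≥ 2√2/3 - √2 C β^{-1/4}. In particular σ̄_β → 2√2/3 as β → +∞. -/

import Mathlib

/-
Upper bound. The pair `v = tanh (√(t² + k⁻²) / √2)`, `φ = π · sigmoid (k t)` is admissible. Its
Modica–Mortola part `v'² + (1 - v²)² / 2` is dominated pointwise by `(1 - tanh² (t / √2))²`,
the energy density of the heteroclinic, whose integral is `4√2 / 3`. The remaining terms are
`O((1 + β) e^{-k|t|})`: `φ'` and `sin φ` decay like `e^{-k|t|}`, and `v = O(|t| + 1/k)` where `φ'`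
is of size `k`.

Lower bound. Choose `c ≤ d` with `cos φ(c) - cos φ(d) > √2`, and let `m` be the minimum of `v` on
`[c, d]`. By AM-GM, `v² φ'² / 4 + β v⁴ sin² φ / 4 ≥ (√β / 2) m³ (-cos φ)'` on `[c, d]`, so the
phase part of the energy is at least `(√β / 2) m³ √2`. Integrability of `(1 - v²)²` makes `v` come
arbitrarily close to `1` on both sides of the minimum point, so by Modica–Mortola the rest is at
least `2√2 (2/3 - m + m³/3)`. Hence `2 G ≥ 4√2/3 - 2√2 (m - √β m³ / 4)`, and
`m - √β m³ / 4 ≤ 4 β^{-1/4}` for all `m ≥ 0`.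
-/
open MeasureTheory Real Set Filter

noncomputable def gInt (β : ℝ) (v φ : ℝ → ℝ) (t : ℝ) : ℝ :=
  (deriv v t)^2 + (1 - (v t)^2)^2 / 2
    + (v t)^2 * (deriv φ t)^2 / 4 + (β/4) * (v t)^4 * (Real.sin (φ t))^2

noncomputable def Gbeta (β : ℝ) (v φ : ℝ → ℝ) : ℝ := (1/2) * ∫ t : ℝ, gInt β v φ t

def Admissible (β : ℝ) (v φ : ℝ → ℝ) : Prop :=
  Differentiable ℝ v ∧ (∀ t, 0 ≤ v t) ∧
  Differentiable ℝ φ ∧ (∀ t, φ t ∈ Set.Icc (0:ℝ) Real.pi) ∧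
  Tendsto φ atBot (nhds 0) ∧ Tendsto φ atTop (nhds Real.pi) ∧
  Integrable (gInt β v φ)

noncomputable def sigmaBar (β : ℝ) : ℝ :=
  sInf {e : ℝ | ∃ v φ, Admissible β v φ ∧ e = Gbeta β v φ}

lemma integral_exp_neg_mul_abs {a : ℝ} (ha : 0 < a) : ∫ t, exp (-(a * |t|)) = 2 / a := by
  rw [integral_comp_abs (f := fun t => exp (-(a * t)))]
  simp_rw [← neg_mul]
  rw [integral_exp_mul_Ioi (neg_neg_of_pos ha), mul_zero, exp_zero, neg_div_neg_eq, mul_one_div]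

lemma integrable_exp_neg_mul_abs {a : ℝ} (ha : 0 < a) :
    Integrable fun t => exp (-(a * |t|)) :=
  Integrable.of_integral_ne_zero <| by rw [integral_exp_neg_mul_abs ha]; positivity

lemma sq_add_one_le_two_mul_exp_abs (x : ℝ) : x ^ 2 + 1 ≤ 2 * exp |x| := by
  nlinarith [quadratic_le_exp_of_nonneg (abs_nonneg x), sq_abs x, abs_nonneg x]

lemma sigmoid_mul_one_sub_le_exp_neg_abs (x : ℝ) :
    sigmoid x * (1 - sigmoid x) ≤ exp (-|x|) := by
  wlog hx : 0 ≤ x generalizing x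
  · simpa [sigmoid_neg, mul_comm] using this (-x) (by linarith)
  rw [abs_of_nonneg hx, ← sigmoid_neg, ← sigmoid_mul_rexp_neg]
  have hσ : sigmoid x * sigmoid x ≤ 1 :=
    mul_le_one₀ (sigmoid_le_one x) (sigmoid_nonneg x) (sigmoid_le_one x)
  nlinarith [mul_le_mul_of_nonneg_right hσ (exp_pos (-x)).le]

lemma sin_pi_mul_sq_le {p : ℝ} (hp₀ : 0 ≤ p) (hp₁ : p ≤ 1) :
    sin (π * p) ^ 2 ≤ π ^ 2 * (p * (1 - p)) := by
  have h₀ : sin (π * p) ≤ π * p := sin_le (by positivity)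
  have h₁ : sin (π * p) ≤ π * (1 - p) := by
    rw [← sin_pi_sub, show π - π * p = π * (1 - p) by ring]
    exact sin_le (mul_nonneg pi_pos.le (by linarith))
  have hs : 0 ≤ sin (π * p) :=
    sin_nonneg_of_nonneg_of_le_pi (by positivity) (mul_le_of_le_one_right pi_pos.le hp₁)
  calc sin (π * p) ^ 2 = sin (π * p) * sin (π * p) := sq _
    _ ≤ (π * p) * (π * (1 - p)) := mul_le_mul h₀ h₁ hs (by positivity)
    _ = π ^ 2 * (p * (1 - p)) := by ring

/-- `kink t = tanh (t / √2)`, the heteroclinic solution of `v' = (1 - v²) / √2`. -/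
noncomputable def kink (t : ℝ) : ℝ := 2 * sigmoid (√2 * t) - 1

lemma kink_zero : kink 0 = 0 := by
  rw [kink, mul_zero, sigmoid_zero]; norm_num

lemma kink_neg (t : ℝ) : kink (-t) = -kink t := by
  rw [kink, kink, mul_neg, sigmoid_neg]; ring

lemma kink_monotone : Monotone kink := fun _ _ h => by
  simpa [kink] using sigmoid_le (mul_le_mul_of_nonneg_left h (sqrt_nonneg 2))

lemma kink_nonneg {t : ℝ} (ht : 0 ≤ t) : 0 ≤ kink t :=
  kink_zero ▸ kink_monotone ht

lemma kink_le_one (t : ℝ) : kink t ≤ 1 := by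
  rw [kink]; linarith [sigmoid_le_one (√2 * t)]

lemma one_sub_kink_sq (t : ℝ) :
    1 - kink t ^ 2 = 4 * (sigmoid (√2 * t) * (1 - sigmoid (√2 * t))) := by
  rw [kink]; ring

lemma one_sub_kink_sq_nonneg (t : ℝ) : 0 ≤ 1 - kink t ^ 2 := by
  rw [one_sub_kink_sq]
  have := sigmoid_le_one (√2 * t)
  exact mul_nonneg zero_le_four (mul_nonneg (sigmoid_nonneg _) (by linarith))

lemma one_sub_kink_sq_le_exp (t : ℝ) : 1 - kink t ^ 2 ≤ 4 * exp (-(√2 * |t|)) := by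
  have h := sigmoid_mul_one_sub_le_exp_neg_abs (√2 * t)
  rw [abs_mul, abs_of_pos (sqrt_pos.2 two_pos)] at h
  rw [one_sub_kink_sq]
  linarith

lemma one_sub_kink_sq_le {s t : ℝ} (h : |t| ≤ s) : 1 - kink s ^ 2 ≤ 1 - kink t ^ 2 := by
  have habs : kink t ^ 2 = kink |t| ^ 2 := by
    rcases abs_cases t with ⟨ht, _⟩ | ⟨ht, _⟩ <;> simp [ht, kink_neg]
  have h₀ := kink_nonneg (abs_nonneg t)
  nlinarith [kink_monotone h]

lemma hasDerivAt_kink (t : ℝ) : HasDerivAt kink ((1 - kink t ^ 2) / √2) t := by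
  have h : HasDerivAt (fun t => 2 * sigmoid (√2 * t) - 1) _ t :=
    (((hasDerivAt_sigmoid (√2 * t)).comp t ((hasDerivAt_id t).const_mul √2)).const_mul
      2).sub_const 1
  refine h.congr_deriv ?_
  rw [one_sub_kink_sq]
  field_simp
  rw [sq_sqrt zero_le_two]
  ring

@[fun_prop]
lemma continuous_kink : Continuous kink := by
  unfold kink; fun_prop

lemma kink_le {t : ℝ} (ht : 0 ≤ t) : kink t ≤ t / √2 := by
  have h := image_sub_le_mul_sub_of_deriv_le (fun x => (hasDerivAt_kink x).differentiableAt)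
    (C := 1 / √2) (fun x => by
      rw [(hasDerivAt_kink x).deriv]
      gcongr
      linarith [sq_nonneg (kink x)]) ht
  rw [kink_zero, sub_zero, sub_zero] at h
  linarith [show 1 / √2 * t = t / √2 by ring]

lemma tendsto_kink_atTop : Tendsto kink atTop (nhds 1) := by
  have h := ((tendsto_sigmoid_atTop.comp
    (tendsto_id.const_mul_atTop (sqrt_pos.2 two_pos))).const_mul 2).sub_const 1
  norm_num at h
  exact h

lemma tendsto_kink_atBot : Tendsto kink atBot (nhds (-1)) := by
  have h := ((tendsto_sigmoid_atBot.comp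
    (tendsto_id.const_mul_atBot (sqrt_pos.2 two_pos))).const_mul 2).sub_const 1
  norm_num at h
  exact h

lemma integrable_one_sub_kink_sq_sq : Integrable fun t => (1 - kink t ^ 2) ^ 2 := by
  refine ((integrable_exp_neg_mul_abs (sqrt_pos.2 two_pos)).const_mul 4).mono'
    (by fun_prop) (ae_of_all _ fun t => ?_)
  have h₀ := one_sub_kink_sq_nonneg t
  have h₁ : 1 - kink t ^ 2 ≤ 1 := by nlinarith
  rw [norm_of_nonneg (by positivity)]
  nlinarith [one_sub_kink_sq_le_exp t]

lemma integral_one_sub_kink_sq_sq : ∫ t, (1 - kink t ^ 2) ^ 2 = 4 * √2 / 3 := by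
  have hderiv (t : ℝ) : HasDerivAt (fun t => √2 * (kink t - kink t ^ 3 / 3))
      ((1 - kink t ^ 2) ^ 2) t := by
    have h := hasDerivAt_kink t
    refine ((h.sub ((h.pow 3).div_const 3)).const_mul √2).congr_deriv ?_
    field_simp
    ring
  rw [integral_of_hasDerivAt_of_tendsto hderiv integrable_one_sub_kink_sq_sq
    ((tendsto_kink_atBot.sub ((tendsto_kink_atBot.pow 3).div_const 3)).const_mul √2)
    ((tendsto_kink_atTop.sub ((tendsto_kink_atTop.pow 3).div_const 3)).const_mul √2)]
  ring

noncomputable def modicaDensity (v : ℝ → ℝ) (t : ℝ) : ℝ :=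
  deriv v t ^ 2 + (1 - v t ^ 2) ^ 2 / 2

noncomputable def phaseDensity (β : ℝ) (v φ : ℝ → ℝ) (t : ℝ) : ℝ :=
  v t ^ 2 * deriv φ t ^ 2 / 4 + β / 4 * v t ^ 4 * sin (φ t) ^ 2

lemma gInt_eq_add (β : ℝ) (v φ : ℝ → ℝ) (t : ℝ) :
    gInt β v φ t = modicaDensity v t + phaseDensity β v φ t := by
  simp only [gInt, modicaDensity, phaseDensity]; ring

lemma measurable_gInt (β : ℝ) {v φ : ℝ → ℝ} (hv : Measurable v) (hφ : Measurable φ) :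
    Measurable (gInt β v φ) := by
  unfold gInt; fun_prop

lemma integrable_modicaDensity_of_integrable_gInt {β : ℝ} (hβ : 0 ≤ β) {v φ : ℝ → ℝ}
    (hv : Measurable v) (h : Integrable (gInt β v φ)) : Integrable (modicaDensity v) :=
  h.mono' (by unfold modicaDensity; fun_prop) (ae_of_all _ fun t => by
    rw [norm_of_nonneg (by unfold modicaDensity; positivity), gInt_eq_add, le_add_iff_nonneg_right]
    unfold phaseDensity
    positivity)

lemma integrable_phaseDensity_of_integrable_gInt {β : ℝ} (hβ : 0 ≤ β) {v φ : ℝ → ℝ}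
    (hv : Measurable v) (hφ : Measurable φ) (h : Integrable (gInt β v φ)) :
    Integrable (phaseDensity β v φ) :=
  h.mono' (by unfold phaseDensity; fun_prop) (ae_of_all _ fun t => by
    rw [norm_of_nonneg (by unfold phaseDensity; positivity), gInt_eq_add, le_add_iff_nonneg_left]
    unfold modicaDensity
    positivity)

/-- The profile of the test pair with `m = 0`: a smoothing of `tanh (|t| / √2)`. -/
noncomputable def trialProfile (k t : ℝ) : ℝ := kink √(t ^ 2 + (k ^ 2)⁻¹)

noncomputable def trialPhase (k t : ℝ) : ℝ := π * sigmoid (k * t)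

section Trial

variable {k : ℝ}

lemma hasDerivAt_trialProfile (hk : k ≠ 0) (t : ℝ) :
    HasDerivAt (trialProfile k)
      ((1 - trialProfile k t ^ 2) / √2 * (t / √(t ^ 2 + (k ^ 2)⁻¹))) t := by
  have hpos : 0 < t ^ 2 + (k ^ 2)⁻¹ := by positivity
  have h := (hasDerivAt_kink _).comp t
    (((hasDerivAt_pow 2 t).add_const (k ^ 2)⁻¹).sqrt hpos.ne')
  refine h.congr_deriv ?_
  rw [trialProfile]
  congr 1
  field_simp
  norm_num

lemma trialProfile_nonneg (t : ℝ) : 0 ≤ trialProfile k t :=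
  kink_nonneg (sqrt_nonneg _)

lemma trialProfile_sq_le (t : ℝ) : trialProfile k t ^ 2 ≤ (t ^ 2 + (k ^ 2)⁻¹) / 2 := by
  calc trialProfile k t ^ 2 ≤ (√(t ^ 2 + (k ^ 2)⁻¹) / √2) ^ 2 :=
        pow_le_pow_left₀ (trialProfile_nonneg t) (kink_le (sqrt_nonneg _)) 2
    _ = (t ^ 2 + (k ^ 2)⁻¹) / 2 := by
        rw [div_pow, sq_sqrt (by positivity), sq_sqrt zero_le_two]

lemma modicaDensity_trialProfile_le (hk : k ≠ 0) (t : ℝ) :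
    modicaDensity (trialProfile k) t ≤ (1 - kink t ^ 2) ^ 2 := by
  have hpos : 0 < t ^ 2 + (k ^ 2)⁻¹ := by positivity
  have hle : t ^ 2 ≤ t ^ 2 + (k ^ 2)⁻¹ := le_add_of_nonneg_right (by positivity)
  have hslope : (t / √(t ^ 2 + (k ^ 2)⁻¹)) ^ 2 ≤ 1 := by
    rwa [div_pow, sq_sqrt hpos.le, div_le_one hpos]
  have hdecay : 1 - trialProfile k t ^ 2 ≤ 1 - kink t ^ 2 :=
    one_sub_kink_sq_le (by rw [← sqrt_sq_eq_abs]; exact sqrt_le_sqrt hle)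
  have hnonneg : 0 ≤ 1 - trialProfile k t ^ 2 := one_sub_kink_sq_nonneg _
  rw [modicaDensity, (hasDerivAt_trialProfile hk t).deriv, mul_pow, div_pow,
    sq_sqrt zero_le_two]
  nlinarith [mul_le_mul_of_nonneg_left hslope (sq_nonneg (1 - trialProfile k t ^ 2))]

lemma hasDerivAt_trialPhase (t : ℝ) :
    HasDerivAt (trialPhase k) (π * (sigmoid (k * t) * (1 - sigmoid (k * t)) * k)) t := by
  have h := ((hasDerivAt_sigmoid (k * t)).comp t ((hasDerivAt_id t).const_mul k)).const_mul π
  rw [mul_one] at h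
  exact h

lemma trialPhase_mem_Icc (t : ℝ) : trialPhase k t ∈ Icc 0 π :=
  ⟨mul_nonneg pi_pos.le (sigmoid_nonneg _), mul_le_of_le_one_right pi_pos.le (sigmoid_le_one _)⟩

lemma tendsto_trialPhase_atBot (hk : 0 < k) : Tendsto (trialPhase k) atBot (nhds 0) := by
  have h := (tendsto_sigmoid_atBot.comp (tendsto_id.const_mul_atBot hk)).const_mul π
  rw [mul_zero] at h
  exact h

lemma tendsto_trialPhase_atTop (hk : 0 < k) : Tendsto (trialPhase k) atTop (nhds π) := by
  have h := (tendsto_sigmoid_atTop.comp (tendsto_id.const_mul_atTop hk)).const_mul π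
  rw [mul_one] at h
  exact h

lemma phaseDensity_trial_le {β : ℝ} (hβ : 0 ≤ β) (hk : 0 < k) (t : ℝ) :
    phaseDensity β (trialProfile k) (trialPhase k) t
      ≤ π ^ 2 * (1 + β) / 4 * exp (-(k * |t|)) := by
  set σ := sigmoid (k * t)
  set q := σ * (1 - σ)
  set E := exp (-(k * |t|))
  have hσ₀ : 0 ≤ σ := sigmoid_nonneg _
  have hσ₁ : σ ≤ 1 := sigmoid_le_one _
  have hq₀ : 0 ≤ q := mul_nonneg hσ₀ (by linarith)
  have hqE : q ≤ E := by
    simpa [abs_mul, abs_of_pos hk] using sigmoid_mul_one_sub_le_exp_neg_abs (k * t)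
  have hv₂ := trialProfile_sq_le (k := k) t
  have hpoly : (k * |t|) ^ 2 + 1 ≤ 2 * exp (k * |t|) := by
    simpa [abs_mul, abs_of_pos hk] using sq_add_one_le_two_mul_exp_abs (k * |t|)
  have hEE : exp (k * |t|) * E * E = E := by
    rw [← exp_add, ← exp_add]; congr 1; ring
  have hkinetic : trialProfile k t ^ 2 * deriv (trialPhase k) t ^ 2 / 4 ≤ π ^ 2 / 4 * E := by
    rw [(hasDerivAt_trialPhase t).deriv]
    calc trialProfile k t ^ 2 * (π * (q * k)) ^ 2 / 4
        ≤ (t ^ 2 + (k ^ 2)⁻¹) / 2 * (π * (q * k)) ^ 2 / 4 := by gcongr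
      _ = π ^ 2 / 8 * ((k * |t|) ^ 2 + 1) * q ^ 2 := by
        field_simp
        rw [sq_abs]
        ring
      _ ≤ π ^ 2 / 8 * (2 * exp (k * |t|)) * E ^ 2 := by gcongr
      _ = π ^ 2 / 4 * (exp (k * |t|) * E * E) := by ring
      _ = π ^ 2 / 4 * E := by rw [hEE]
  have hanisotropy :
      β / 4 * trialProfile k t ^ 4 * sin (trialPhase k t) ^ 2 ≤ β * π ^ 2 / 4 * E := by
    have hv₄ : trialProfile k t ^ 4 ≤ 1 := pow_le_one₀ (trialProfile_nonneg t) (kink_le_one _)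
    calc β / 4 * trialProfile k t ^ 4 * sin (trialPhase k t) ^ 2
        ≤ β / 4 * 1 * (π ^ 2 * q) := by gcongr; exact sin_pi_mul_sq_le hσ₀ hσ₁
      _ ≤ β * π ^ 2 / 4 * E := by
        nlinarith [mul_le_mul_of_nonneg_left hqE (by positivity : 0 ≤ β * π ^ 2)]
  rw [phaseDensity]
  linarith

lemma gInt_trial_le {β : ℝ} (hβ : 0 ≤ β) (hk : 0 < k) (t : ℝ) :
    gInt β (trialProfile k) (trialPhase k) t
      ≤ (1 - kink t ^ 2) ^ 2 + π ^ 2 * (1 + β) / 4 * exp (-(k * |t|)) := by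
  rw [gInt_eq_add]
  exact add_le_add (modicaDensity_trialProfile_le hk.ne' t) (phaseDensity_trial_le hβ hk t)

lemma integrable_trial_majorant (c : ℝ) (hk : 0 < k) :
    Integrable fun t => (1 - kink t ^ 2) ^ 2 + c * exp (-(k * |t|)) :=
  integrable_one_sub_kink_sq_sq.add ((integrable_exp_neg_mul_abs hk).const_mul _)

lemma integrable_gInt_trial {β : ℝ} (hβ : 0 ≤ β) (hk : 0 < k) :
    Integrable (gInt β (trialProfile k) (trialPhase k)) := by
  refine (integrable_trial_majorant (π ^ 2 * (1 + β) / 4) hk).mono'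
    (measurable_gInt β (by unfold trialProfile; fun_prop)
      (by unfold trialPhase; fun_prop)).aestronglyMeasurable (ae_of_all _ fun t => ?_)
  rw [norm_of_nonneg (by unfold gInt; positivity)]
  exact gInt_trial_le hβ hk t

lemma admissible_trial {β : ℝ} (hβ : 0 ≤ β) (hk : 0 < k) :
    Admissible β (trialProfile k) (trialPhase k) :=
  ⟨fun t => (hasDerivAt_trialProfile hk.ne' t).differentiableAt, trialProfile_nonneg,
    fun t => (hasDerivAt_trialPhase t).differentiableAt, trialPhase_mem_Icc,
    tendsto_trialPhase_atBot hk, tendsto_trialPhase_atTop hk, integrable_gInt_trial hβ hk⟩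

lemma Gbeta_trial_le {β : ℝ} (hβ : 0 ≤ β) (hk : 0 < k) :
    Gbeta β (trialProfile k) (trialPhase k) ≤ 2 * √2 / 3 + π ^ 2 * (1 + β) / (4 * k) := by
  have h := integral_mono (integrable_gInt_trial hβ hk)
    (integrable_trial_majorant (π ^ 2 * (1 + β) / 4) hk) (gInt_trial_le hβ hk)
  rw [integral_add integrable_one_sub_kink_sq_sq ((integrable_exp_neg_mul_abs hk).const_mul _),
    integral_const_mul, integral_one_sub_kink_sq_sq, integral_exp_neg_mul_abs hk] at h
  rw [Gbeta]
  calc 1 / 2 * ∫ t, gInt β (trialProfile k) (trialPhase k) t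
      ≤ 1 / 2 * (4 * √2 / 3 + π ^ 2 * (1 + β) / 4 * (2 / k)) := by gcongr
    _ = 2 * √2 / 3 + π ^ 2 * (1 + β) / (4 * k) := by field_simp; ring

end Trial

noncomputable def modicaPotential (s : ℝ) : ℝ := s - s ^ 3 / 3

lemma modicaPotential_le {s : ℝ} (hs : 0 ≤ s) : modicaPotential s ≤ s := by
  rw [modicaPotential]; linarith [pow_nonneg hs 3]

lemma two_thirds_sub_modicaPotential_le {s : ℝ} (hs : 0 ≤ s) :
    2 / 3 - modicaPotential s ≤ 2 / 3 * (1 - s ^ 2) ^ 2 := by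
  rw [modicaPotential]
  nlinarith [mul_nonneg (sq_nonneg (1 - s)) (by nlinarith : (0:ℝ) ≤ 3 * s + 2 * s ^ 2)]

lemma sqrt_two_mul_abs_sub_le_integral_modicaDensity {v : ℝ → ℝ} (hv : Differentiable ℝ v)
    {a b : ℝ} (hab : a ≤ b) (hint : IntegrableOn (modicaDensity v) (Icc a b)) :
    √2 * |modicaPotential (v b) - modicaPotential (v a)| ≤ ∫ t in a..b, modicaDensity v t := by
  set g' : ℝ → ℝ := fun t => √2 * ((1 - v t ^ 2) * deriv v t)
  have hg (t : ℝ) : HasDerivAt (fun t => √2 * modicaPotential (v t)) (g' t) t := by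
    have h := (hv t).hasDerivAt
    refine ((h.sub ((h.pow 3).div_const 3)).const_mul √2).congr_deriv ?_
    simp only [g']
    ring
  have hbound (t : ℝ) : |g' t| ≤ modicaDensity v t := by
    have h2 : √2 ^ 2 = 2 := sq_sqrt zero_le_two
    rw [abs_le, modicaDensity]
    constructor
    · nlinarith [sq_nonneg (√2 * deriv v t + (1 - v t ^ 2))]
    · nlinarith [sq_nonneg (√2 * deriv v t - (1 - v t ^ 2))]
  have hcont : Continuous fun t => √2 * modicaPotential (v t) := by
    have := hv.continuous
    unfold modicaPotential; fun_prop
  have hup := intervalIntegral.sub_le_integral_of_hasDeriv_right_of_le hab hcont.continuousOn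
    (fun t _ => (hg t).hasDerivWithinAt) hint (fun t _ => (abs_le.1 (hbound t)).2)
  have hdown := intervalIntegral.sub_le_integral_of_hasDeriv_right_of_le hab
    hcont.neg.continuousOn (fun t _ => (hg t).neg.hasDerivWithinAt) hint
    (fun t _ => neg_le.1 (abs_le.1 (hbound t)).1)
  simp only [Pi.neg_apply] at hdown
  rw [← abs_of_pos (sqrt_pos.2 two_pos : (0:ℝ) < √2), ← abs_mul, mul_sub, abs_le]
  constructor <;> linarith

lemma exists_mem_lt_of_integrableOn {α : Type*} [MeasurableSpace α] {μ : Measure α}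
    {f : α → ℝ} {s : Set α} (hs : MeasurableSet s) (hμs : μ s = ⊤) (hf : IntegrableOn f s μ)
    {ε : ℝ} (hε : 0 < ε) : ∃ t ∈ s, f t < ε := by
  by_contra! h
  have hconst : IntegrableOn (fun _ => ε) s μ :=
    hf.mono' aestronglyMeasurable_const ((ae_restrict_iff' hs).2 (ae_of_all _ fun t ht => by
      rw [norm_of_nonneg hε.le]; exact h t ht))
  rw [integrableOn_const_iff, hμs] at hconst
  simp [hε.ne'] at hconst

lemma exists_modicaPotential_gt {v : ℝ → ℝ} (hv₀ : ∀ t, 0 ≤ v t) {s : Set ℝ}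
    (hs : MeasurableSet s) (hμs : volume s = ⊤) (hint : IntegrableOn (modicaDensity v) s)
    {δ : ℝ} (hδ : 0 < δ) : ∃ t ∈ s, 2 / 3 - 2 / 3 * δ < modicaPotential (v t) := by
  obtain ⟨t, hts, ht⟩ := exists_mem_lt_of_integrableOn hs hμs hint (half_pos hδ)
  refine ⟨t, hts, ?_⟩
  have h := two_thirds_sub_modicaPotential_le (hv₀ t)
  rw [modicaDensity] at ht
  nlinarith [sq_nonneg (deriv v t)]

lemma two_mul_sqrt_two_mul_le_integral_modicaDensity {v : ℝ → ℝ} (hv : Differentiable ℝ v)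
    (hv₀ : ∀ t, 0 ≤ v t) (hint : Integrable (modicaDensity v)) (t₀ : ℝ) :
    2 * √2 * (2 / 3 - modicaPotential (v t₀)) ≤ ∫ t, modicaDensity v t := by
  refine le_of_forall_pos_le_add fun ε hε => ?_
  set δ := 3 * ε / (4 * √2)
  have hδ : 0 < δ := by positivity
  have hδε : √2 * (4 / 3 * δ) = ε := by simp only [δ]; field_simp
  obtain ⟨a, ha, hWa⟩ := exists_modicaPotential_gt hv₀ measurableSet_Iio volume_Iio
    hint.integrableOn hδ (s := Iio t₀)
  obtain ⟨b, hb, hWb⟩ := exists_modicaPotential_gt hv₀ measurableSet_Ioi volume_Ioi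
    hint.integrableOn hδ (s := Ioi t₀)
  have hleft := sqrt_two_mul_abs_sub_le_integral_modicaDensity hv (le_of_lt ha)
    hint.integrableOn
  have hright := sqrt_two_mul_abs_sub_le_integral_modicaDensity hv (le_of_lt hb)
    hint.integrableOn
  have hsplit := intervalIntegral.integral_add_adjacent_intervals
    (hint.intervalIntegrable (a := a) (b := t₀)) (hint.intervalIntegrable (b := b))
  have htotal : ∫ t in a..b, modicaDensity v t ≤ ∫ t, modicaDensity v t := by
    rw [intervalIntegral.integral_of_le (ha.trans hb).le]
    exact setIntegral_le_integral hint
      (ae_of_all _ fun t => by unfold modicaDensity; positivity)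
  have h₁ : modicaPotential (v a) - modicaPotential (v t₀)
      ≤ |modicaPotential (v t₀) - modicaPotential (v a)| := by
    rw [abs_sub_comm]; exact le_abs_self _
  have h₂ := le_abs_self (modicaPotential (v b) - modicaPotential (v t₀))
  calc 2 * √2 * (2 / 3 - modicaPotential (v t₀))
      = √2 * ((2 / 3 - 2 / 3 * δ - modicaPotential (v t₀))
          + (2 / 3 - 2 / 3 * δ - modicaPotential (v t₀))) + √2 * (4 / 3 * δ) := by ring
    _ ≤ √2 * (|modicaPotential (v t₀) - modicaPotential (v a)|
          + |modicaPotential (v b) - modicaPotential (v t₀)|) + ε := by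
        rw [hδε]; gcongr <;> linarith
    _ ≤ (∫ t, modicaDensity v t) + ε := by rw [mul_add]; linarith

lemma sqrt_mul_cube_mul_le {β m v s p : ℝ} (hβ : 0 ≤ β) (hm : 0 ≤ m) (hmv : m ≤ v)
    (hs : 0 ≤ s) : √β / 2 * m ^ 3 * (s * p) ≤ v ^ 2 * p ^ 2 / 4 + β / 4 * v ^ 4 * s ^ 2 := by
  have hβ' : √β ^ 2 = β := sq_sqrt hβ
  calc √β / 2 * m ^ 3 * (s * p) ≤ √β / 2 * m ^ 3 * (s * |p|) := by
        gcongr; exact le_abs_self p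
    _ ≤ √β / 2 * v ^ 3 * (s * |p|) := by gcongr
    _ = 2 * (v * |p| / 2) * (√β / 2 * v ^ 2 * s) := by ring
    _ ≤ (v * |p| / 2) ^ 2 + (√β / 2 * v ^ 2 * s) ^ 2 := two_mul_le_add_sq _ _
    _ = v ^ 2 * |p| ^ 2 / 4 + √β ^ 2 / 4 * v ^ 4 * s ^ 2 := by ring
    _ = v ^ 2 * p ^ 2 / 4 + β / 4 * v ^ 4 * s ^ 2 := by rw [hβ', sq_abs]

lemma sqrt_mul_cube_mul_cos_sub_le_integral_phaseDensity {β : ℝ} (hβ : 0 ≤ β) {v φ : ℝ → ℝ}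
    (hφ : Differentiable ℝ φ) (hφπ : ∀ t, φ t ∈ Icc 0 π) {c d m : ℝ} (hcd : c ≤ d)
    (hm : 0 ≤ m) (hmv : ∀ t ∈ Icc c d, m ≤ v t)
    (hint : IntegrableOn (phaseDensity β v φ) (Icc c d)) :
    √β / 2 * m ^ 3 * (cos (φ c) - cos (φ d)) ≤ ∫ t in c..d, phaseDensity β v φ t := by
  have hg (t : ℝ) : HasDerivAt (fun t => -(√β / 2 * m ^ 3 * cos (φ t)))
      (√β / 2 * m ^ 3 * (sin (φ t) * deriv φ t)) t := by
    refine (((hφ t).hasDerivAt.cos.const_mul (√β / 2 * m ^ 3)).neg).congr_deriv ?_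
    ring
  have hcont : Continuous fun t => -(√β / 2 * m ^ 3 * cos (φ t)) := by
    have := hφ.continuous
    fun_prop
  have h := intervalIntegral.sub_le_integral_of_hasDeriv_right_of_le hcd hcont.continuousOn
    (fun t _ => (hg t).hasDerivWithinAt) hint (fun t ht => sqrt_mul_cube_mul_le hβ hm
      (hmv t (Ioo_subset_Icc_self ht)) (sin_nonneg_of_nonneg_of_le_pi (hφπ t).1 (hφπ t).2))
  linarith

lemma exists_le_and_lt_cos_sub_cos {φ : ℝ → ℝ} (hbot : Tendsto φ atBot (nhds 0))
    (htop : Tendsto φ atTop (nhds π)) {L : ℝ} (hL : L < 2) :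
    ∃ c d, c ≤ d ∧ L < cos (φ c) - cos (φ d) := by
  have hcbot : Tendsto (fun t => cos (φ t)) atBot (nhds 1) := by
    have h := (continuous_cos.tendsto 0).comp hbot
    rw [cos_zero] at h
    exact h
  have hctop : Tendsto (fun t => cos (φ t)) atTop (nhds (-1)) := by
    have h := (continuous_cos.tendsto π).comp htop
    rw [cos_pi] at h
    exact h
  obtain ⟨c, hc⟩ := eventually_atBot.1 (hcbot.eventually (lt_mem_nhds
    (show 1 - (2 - L) / 2 < 1 by linarith)))
  obtain ⟨d, hd⟩ := eventually_atTop.1 (hctop.eventually (gt_mem_nhds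
    (show -1 < -1 + (2 - L) / 2 by linarith)))
  refine ⟨min c d, d, min_le_right c d, ?_⟩
  linarith [hc (min c d) (min_le_left c d), hd d le_rfl]

lemma sub_cube_div_four_le_four {x : ℝ} (hx : 0 ≤ x) : x - x ^ 3 / 4 ≤ 4 := by
  nlinarith [mul_nonneg hx (sq_nonneg (x - 1)), sq_nonneg (x - 5 / 4)]

lemma sub_sqrt_mul_cube_le {β m : ℝ} (hβ : 0 < β) (hm : 0 ≤ m) :
    m - √β / 4 * m ^ 3 ≤ 4 * β ^ (-(1:ℝ) / 4) := by
  set s := β ^ ((1:ℝ) / 4)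
  have hs : 0 < s := rpow_pos_of_pos hβ _
  have hsqrt : √β = s ^ 2 := by
    rw [sqrt_eq_rpow, ← rpow_natCast, ← rpow_mul hβ.le]; norm_num
  have hinv : β ^ (-(1:ℝ) / 4) = s⁻¹ := by
    rw [← rpow_neg hβ.le]; ring_nf
  rw [hsqrt, hinv, ← div_eq_mul_inv, le_div_iff₀ hs]
  have := sub_cube_div_four_le_four (mul_nonneg hm hs.le)
  nlinarith

lemma Gbeta_eq_half_integral_add {β : ℝ} {v φ : ℝ → ℝ} (h₁ : Integrable (modicaDensity v))
    (h₂ : Integrable (phaseDensity β v φ)) :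
    Gbeta β v φ = 1 / 2 * ((∫ t, modicaDensity v t) + ∫ t, phaseDensity β v φ t) := by
  rw [Gbeta, ← integral_add h₁ h₂]
  simp_rw [gInt_eq_add]

lemma le_Gbeta_of_admissible {β : ℝ} (hβ : 0 < β) {v φ : ℝ → ℝ} (hA : Admissible β v φ) :
    2 * √2 / 3 - √2 * 4 * β ^ (-(1:ℝ) / 4) ≤ Gbeta β v φ := by
  obtain ⟨hv, hv₀, hφ, hφπ, hbot, htop, hint⟩ := hA
  obtain ⟨c, d, hcd, hcos⟩ := exists_le_and_lt_cos_sub_cos hbot htop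
    (sqrt_two_lt_three_halves.trans (by norm_num))
  obtain ⟨t₀, -, hmin⟩ := isCompact_Icc.exists_isMinOn (nonempty_Icc.2 hcd)
    hv.continuous.continuousOn
  set m := v t₀
  have hm : 0 ≤ m := hv₀ t₀
  have hF₁ := integrable_modicaDensity_of_integrable_gInt hβ.le hv.continuous.measurable hint
  have hF₂ := integrable_phaseDensity_of_integrable_gInt hβ.le hv.continuous.measurable
    hφ.continuous.measurable hint
  have hmodica := two_mul_sqrt_two_mul_le_integral_modicaDensity hv hv₀ hF₁ t₀
  have hphase := sqrt_mul_cube_mul_cos_sub_le_integral_phaseDensity hβ.le hφ hφπ hcd hm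
    (fun t ht => hmin ht) hF₂.integrableOn
  have hphase_total : ∫ t in c..d, phaseDensity β v φ t ≤ ∫ t, phaseDensity β v φ t := by
    rw [intervalIntegral.integral_of_le hcd]
    exact setIntegral_le_integral hF₂ (ae_of_all _ fun t => by unfold phaseDensity; positivity)
  have hcube : √β / 2 * m ^ 3 * √2 ≤ √β / 2 * m ^ 3 * (cos (φ c) - cos (φ d)) := by gcongr
  calc 2 * √2 / 3 - √2 * 4 * β ^ (-(1:ℝ) / 4)
      ≤ 2 * √2 / 3 - √2 * (m - √β / 4 * m ^ 3) := by
        rw [mul_assoc]; gcongr; exact sub_sqrt_mul_cube_le hβ hm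
    _ ≤ 2 * √2 / 3 - √2 * (modicaPotential m - √β / 4 * m ^ 3) := by
        gcongr; exact modicaPotential_le hm
    _ = 1 / 2 * (2 * √2 * (2 / 3 - modicaPotential m) + √β / 2 * m ^ 3 * √2) := by ring
    _ ≤ Gbeta β v φ := by
        rw [Gbeta_eq_half_integral_add hF₁ hF₂]; gcongr; linarith

lemma sigmaBar_le_Gbeta {β : ℝ} (hβ : 0 < β) {v φ : ℝ → ℝ} (hA : Admissible β v φ) :
    sigmaBar β ≤ Gbeta β v φ :=
  csInf_le ⟨_, fun _ ⟨_, _, hA', he⟩ => he ▸ le_Gbeta_of_admissible hβ hA'⟩ ⟨v, φ, hA, rfl⟩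

lemma sigmaBar_le {β : ℝ} (hβ : 0 < β) : sigmaBar β ≤ 2 * √2 / 3 := by
  have hlim : Tendsto (fun k : ℝ => 2 * √2 / 3 + π ^ 2 * (1 + β) / (4 * k)) atTop
      (nhds (2 * √2 / 3)) := by
    simpa using tendsto_const_nhds.add
      (tendsto_const_nhds.div_atTop (tendsto_id.const_mul_atTop (four_pos : (0:ℝ) < 4)))
  refine ge_of_tendsto hlim ((eventually_gt_atTop 0).mono fun k hk => ?_)
  exact (sigmaBar_le_Gbeta hβ (admissible_trial hβ.le hk)).trans (Gbeta_trial_le hβ.le hk)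

lemma le_sigmaBar {β : ℝ} (hβ : 0 < β) :
    2 * √2 / 3 - √2 * 4 * β ^ (-(1:ℝ) / 4) ≤ sigmaBar β :=
  le_csInf ⟨_, _, _, admissible_trial hβ.le one_pos, rfl⟩
    fun _ ⟨_, _, hA, he⟩ => he ▸ le_Gbeta_of_admissible hβ hA

theorem sigmaBar_large_beta :
    (∀ β > (0:ℝ), sigmaBar β ≤ 2 * Real.sqrt 2 / 3) ∧
    (∃ C > (0:ℝ), ∀ β > (0:ℝ),
      2 * Real.sqrt 2 / 3 - Real.sqrt 2 * C * β ^ (-(1:ℝ)/4) ≤ sigmaBar β) ∧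
    Tendsto sigmaBar atTop (nhds (2 * Real.sqrt 2 / 3)) := by
  refine ⟨fun β hβ => sigmaBar_le hβ, ⟨4, four_pos, fun β hβ => le_sigmaBar hβ⟩, ?_⟩
  have hdecay : Tendsto (fun β : ℝ => β ^ (-(1:ℝ) / 4)) atTop (nhds 0) := by
    simpa [neg_div] using tendsto_rpow_neg_atTop (by norm_num : (0:ℝ) < 1 / 4)
  have hlower : Tendsto (fun β : ℝ => 2 * √2 / 3 - √2 * 4 * β ^ (-(1:ℝ) / 4)) atTop
      (nhds (2 * √2 / 3)) := by
    simpa using tendsto_const_nhds.sub (hdecay.const_mul (√2 * 4))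
  exact tendsto_of_tendsto_of_tendsto_of_le_of_le' hlower tendsto_const_nhds
    ((eventually_gt_atTop 0).mono fun β hβ => le_sigmaBar hβ)
    ((eventually_gt_atTop 0).mono fun β hβ => sigmaBar_le hβ)
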